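/- arXiv:math/0308158 — 2 statements merged into one kernel-verified Lean document; each statement's English description precedes it below -/
import Mathlib

section
/- Let the action of G on (X, μ) be ergodic, let L be a representation of X⋊G on a separable complex Hilbert space K, and let b be an L-cocycle. Assume there exists a measurable E ⊆ X with μ(E) > 0 such that for every x ∈ E, sup{ ‖b(x,g)‖ : g ∈ G, g⁻¹•x ∈ E } < ∞. Then b is cohomologous to an L-cocycle b' (i.e. b − b' is an L-coboundary) for which there exists a μ-conull measurable U ⊆ X such that for every x ∈ U, sup{ ‖b'(x,g)‖ : g ∈ G, g⁻¹•x ∈ U } < ∞. -/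
open MeasureTheory Filter Topology
open scoped Pointwise symmDiff InnerProductSpace ENNReal

section Defs

variable (G : Type*) {X : Type*} [Group G] [MulAction G X] [MeasurableSpace X]

/-- The action of `G` on `X` is measurable and the measure `μ` is quasi-invariant:
for every `g`, the pushforward of `μ` under `x ↦ g • x` is equivalent to `μ`. -/
def QuasiInvariantAction (μ : Measure X) : Prop :=
  (∀ g : G, Measurable fun x : X => g • x) ∧
    ∀ g : G, μ.map (fun x : X => g • x) ≪ μ ∧ μ ≪ μ.map (fun x : X => g • x)

/-- Ergodicity of the action: every measurable `A` with `μ((g • A) ∆ A) = 0` for all `g`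
is null or conull. -/
def IsErgodicSMulAction (μ : Measure X) : Prop :=
  ∀ A : Set X, MeasurableSet A → (∀ g : G, μ ((g • A) ∆ A) = 0) → μ A = 0 ∨ μ A = 1

variable {G}
variable {K : Type*} [NormedAddCommGroup K] [InnerProductSpace ℂ K]
  [MeasurableSpace K] [BorelSpace K]

/-- A representation of the action groupoid `X ⋊ G` on the Hilbert space `K`. -/
def IsGroupoidRep (μ : Measure X) (L : X → G → (K ≃ₗᵢ[ℂ] K)) : Prop :=
  (∀ (g : G) (v : K), Measurable fun x : X => L x g v) ∧
    ∀ g₁ g₂ : G, ∀ᵐ x ∂μ, ∀ v : K, L x (g₁ * g₂) v = L x g₁ (L (g₁⁻¹ • x) g₂ v)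

/-- An `L`-cocycle. -/
def IsLCocycle (μ : Measure X) (L : X → G → (K ≃ₗᵢ[ℂ] K)) (b : X → G → K) : Prop :=
  (∀ g : G, Measurable fun x : X => b x g) ∧
    ∀ g₁ g₂ : G, ∀ᵐ x ∂μ, b x (g₁ * g₂) = b x g₁ + L x g₁ (b (g₁⁻¹ • x) g₂)

/-- An `L`-coboundary. -/
def IsLCoboundary (μ : Measure X) (L : X → G → (K ≃ₗᵢ[ℂ] K)) (b : X → G → K) : Prop :=
  ∃ ξ : X → K, Measurable ξ ∧ ∀ g : G, ∀ᵐ x ∂μ, b x g = ξ x - L x g (ξ (g⁻¹ • x))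

/-- A unit section: a measurable map `ξ : X → K` of norm one almost everywhere. -/
def IsUnitSection (μ : Measure X) (ξ : X → K) : Prop :=
  Measurable ξ ∧ ∀ᵐ x ∂μ, ‖ξ x‖ = 1

/-- The representation `L` has an invariant unit section. -/
def HasInvariantUnitSection (μ : Measure X) (L : X → G → (K ≃ₗᵢ[ℂ] K)) : Prop :=
  ∃ ξ : X → K, IsUnitSection μ ξ ∧ ∀ g : G, ∀ᵐ x ∂μ, L x g (ξ (g⁻¹ • x)) = ξ x

/-- The representation `L` almost has invariant unit sections. -/
def AlmostHasInvariantUnitSections (μ : Measure X) (L : X → G → (K ≃ₗᵢ[ℂ] K)) : Prop :=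
  ∃ ξ : ℕ → X → K, (∀ n, IsUnitSection μ (ξ n)) ∧
    ∀ g : G, ∀ᵐ x ∂μ,
      Tendsto (fun n => ‖L x g (ξ n (g⁻¹ • x)) - ξ n x‖) atTop (𝓝 0)

variable (G)

/-- Property (T) for the action of `G` on `(X, μ)`: every representation of `X ⋊ G`
on a separable complex Hilbert space that almost has invariant unit sections has an
invariant unit section. -/
def ActionHasPropertyT (μ : Measure X) : Prop :=
  ∀ (K : Type) [NormedAddCommGroup K] [InnerProductSpace ℂ K]
    [CompleteSpace K] [SecondCountableTopology K]
    [MeasurableSpace K] [BorelSpace K]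
    (L : X → G → (K ≃ₗᵢ[ℂ] K)),
    IsGroupoidRep μ L → AlmostHasInvariantUnitSections μ L → HasInvariantUnitSection μ L

end Defs

/-! The saturation `S = ⋃ g, g • E` is invariant, hence conull by ergodicity. Choose measurably,
for `x ∈ S`, some `γ x` with `(γ x)⁻¹ • x ∈ E`, and subtract from `b` the coboundary of
`ξ x = b(x, γ x)`. By the cocycle identity the new cocycle is
`b'(x, g) = L(x, γ x) b(y, (γ x)⁻¹ g γ(g⁻¹ • x))` with `y = (γ x)⁻¹ • x ∈ E`, and the group element
here moves `y` into `E` as soon as `g⁻¹ • x ∈ S`; so `‖b'(x, g)‖` is bounded by the constant of `y`. -/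

section Measurability

theorem Measurable.apply_of_continuous_of_measurable {X K F : Type*} [MeasurableSpace X]
    [TopologicalSpace K] [TopologicalSpace.MetrizableSpace K] [SecondCountableTopology K]
    [MeasurableSpace K] [BorelSpace K] [TopologicalSpace F] [TopologicalSpace.PseudoMetrizableSpace F]
    [MeasurableSpace F] [BorelSpace F] {T : X → K → F} (hcont : ∀ x, Continuous (T x))
    (hmeas : ∀ v, Measurable fun x => T x v) {w : X → K} (hw : Measurable w) :
    Measurable fun x => T x (w x) :=
  (measurable_uncurry_of_continuous_of_measurable hcont hmeas).comp (hw.prodMk measurable_id)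

theorem exists_measurable_index_mem_of_mem_iUnion {X : Type*} [MeasurableSpace X]
    {A : ℕ → Set X} (hA : ∀ k, MeasurableSet (A k)) :
    ∃ n : X → ℕ, Measurable n ∧ ∀ x ∈ ⋃ k, A k, x ∈ A (n x) := by
  classical
  have hex : ∀ x, ∃ k, x ∈ ⋃ k, A k → x ∈ A k := fun x =>
    (em (x ∈ ⋃ k, A k)).elim (fun hx => (Set.mem_iUnion.1 hx).imp fun _ hk _ => hk)
      fun hx => ⟨0, fun h => absurd h hx⟩
  refine ⟨fun x => Nat.find (hex x), measurable_find hex fun k => ?_,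
    fun x hx => Nat.find_spec (hex x) hx⟩
  convert (MeasurableSet.iUnion hA).compl.union (hA k) using 1
  ext x
  exact imp_iff_not_or

end Measurability

section Saturation

variable {G X : Type*} [Group G] [MulAction G X]

theorem smul_iUnion_smul_eq (g : G) (E : Set X) : g • ⋃ h : G, h • E = ⋃ h : G, h • E := by
  simp only [Set.smul_set_iUnion, smul_smul]
  exact (mul_left_surjective g).iUnion_comp fun h => h • E

section Measurable

variable [MeasurableSpace X] {E : Set X}

theorem measurableSet_smul_set_of_measurable (hact : ∀ g : G, Measurable fun x : X => g • x)
    (hE : MeasurableSet E) (g : G) : MeasurableSet (g • E) :=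
  Set.preimage_smul_inv g E ▸ hE.preimage (hact g⁻¹)

theorem measurableSet_iUnion_smul [Countable G] (hact : ∀ g : G, Measurable fun x : X => g • x)
    (hE : MeasurableSet E) : MeasurableSet (⋃ g : G, g • E) :=
  .iUnion (measurableSet_smul_set_of_measurable hact hE)

theorem exists_measurable_index_inv_smul_mem [Countable G]
    (hact : ∀ g : G, Measurable fun x : X => g • x) (hE : MeasurableSet E) :
    ∃ (e : ℕ → G) (n : X → ℕ), Measurable n ∧ ∀ x ∈ ⋃ g : G, g • E, (e (n x))⁻¹ • x ∈ E := by
  obtain ⟨e, he⟩ := exists_surjective_nat G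
  obtain ⟨n, hn, hmem⟩ := exists_measurable_index_mem_of_mem_iUnion
    fun k => measurableSet_smul_set_of_measurable hact hE (e k)
  refine ⟨e, n, hn, fun x hx => ?_⟩
  rw [← he.iUnion_comp] at hx
  exact Set.mem_smul_set_iff_inv_smul_mem.1 (hmem x hx)

end Measurable

theorem IsErgodicSMulAction.measure_compl_eq_zero [MeasurableSpace X] {μ : Measure X}
    [IsProbabilityMeasure μ] (herg : IsErgodicSMulAction G μ) {A : Set X}
    (hA : MeasurableSet A) (hinv : ∀ g : G, g • A = A) (hpos : 0 < μ A) : μ Aᶜ = 0 := by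
  obtain h | h := herg A hA fun g => by rw [hinv g, symmDiff_self, Set.bot_eq_empty, measure_empty]
  · exact absurd h hpos.ne'
  · exact (prob_compl_eq_zero_iff hA).2 h

end Saturation

section Cocycle

variable {G X K : Type*} [Group G] [MulAction G X]

theorem cocycle_sub_add_eq [AddCommGroup K] {L : X → G → K → K} {b : X → G → K} {x : X}
    (hx : ∀ g₁ g₂ : G, b x (g₁ * g₂) = b x g₁ + L x g₁ (b (g₁⁻¹ • x) g₂)) (g h k : G) :
    b x g - b x h + L x g (b (g⁻¹ • x) k) = L x h (b (h⁻¹ • x) (h⁻¹ * (g * k))) := by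
  have hgk := hx h (h⁻¹ * (g * k))
  rw [mul_inv_cancel_left, hx g k] at hgk
  rw [← add_sub_cancel_left (b x h) (L x h _), ← hgk]
  abel

variable [NormedAddCommGroup K] [InnerProductSpace ℂ K] {L : X → G → (K ≃ₗᵢ[ℂ] K)}

def lCoboundary (L : X → G → (K ≃ₗᵢ[ℂ] K)) (ξ : X → K) : X → G → K :=
  fun x g => ξ x - L x g (ξ (g⁻¹ • x))

theorem norm_sub_lCoboundary_le {b : X → G → K} {γ : X → G} {x : X}
    (hx : ∀ g₁ g₂ : G, b x (g₁ * g₂) = b x g₁ + L x g₁ (b (g₁⁻¹ • x) g₂)) {E : Set X} {C : ℝ}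
    (hC : ∀ g : G, g⁻¹ • (γ x)⁻¹ • x ∈ E → ‖b ((γ x)⁻¹ • x) g‖ ≤ C) {g : G}
    (hg : (γ (g⁻¹ • x))⁻¹ • g⁻¹ • x ∈ E) :
    ‖(b - lCoboundary L fun y => b y (γ y)) x g‖ ≤ C := by
  set k := (γ x)⁻¹ * (g * γ (g⁻¹ • x))
  have hk : k⁻¹ • (γ x)⁻¹ • x ∈ E := by
    simpa only [k, mul_inv_rev, inv_inv, mul_smul, smul_inv_smul] using hg
  calc ‖(b - lCoboundary L fun y => b y (γ y)) x g‖ = ‖L x (γ x) (b ((γ x)⁻¹ • x) k)‖ := by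
        rw [← cocycle_sub_add_eq (L := fun x g v => L x g v) hx, Pi.sub_apply, Pi.sub_apply,
          lCoboundary, sub_sub_eq_add_sub, add_sub_right_comm]
    _ ≤ C := ((L x (γ x)).norm_map _).trans_le (hC k hk)

variable [MeasurableSpace X] [MeasurableSpace K] {μ : Measure X}

theorem isLCoboundary_lCoboundary {ξ : X → K} (hξ : Measurable ξ) :
    IsLCoboundary μ L (lCoboundary L ξ) :=
  ⟨ξ, hξ, fun _ => .of_forall fun _ => rfl⟩

variable [BorelSpace K] [SecondCountableTopology K]

theorem isLCocycle_lCoboundary (hact : ∀ g : G, Measurable fun x : X => g • x)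
    (hL : IsGroupoidRep μ L) {ξ : X → K} (hξ : Measurable ξ) :
    IsLCocycle μ L (lCoboundary L ξ) := by
  refine ⟨fun g => hξ.sub ((hξ.comp (hact g⁻¹)).apply_of_continuous_of_measurable
    (fun x => (L x g).continuous) (hL.1 g)), fun g₁ g₂ => ?_⟩
  filter_upwards [hL.2 g₁ g₂] with x hx
  simp only [lCoboundary, hx, map_sub, mul_inv_rev, mul_smul]
  abel

theorem IsLCocycle.sub {b c : X → G → K} (hb : IsLCocycle μ L b) (hc : IsLCocycle μ L c) :
    IsLCocycle μ L (b - c) := by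
  refine ⟨fun g => (hb.1 g).sub (hc.1 g), fun g₁ g₂ => ?_⟩
  filter_upwards [hb.2 g₁ g₂, hc.2 g₁ g₂] with x hb' hc'
  simp only [Pi.sub_apply, hb', hc', map_sub]
  abel

end Cocycle

theorem cocycle_bounded_on_set_cohomologous_to_bounded_on_conull_general
    {G X : Type*} [Group G] [Countable G]
    [MeasurableSpace X] [MulAction G X]
    (μ : Measure X) [IsProbabilityMeasure μ]
    (hqi : QuasiInvariantAction G μ) (herg : IsErgodicSMulAction G μ)
    {K : Type*} [NormedAddCommGroup K] [InnerProductSpace ℂ K]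
    [SecondCountableTopology K] [MeasurableSpace K] [BorelSpace K]
    (L : X → G → (K ≃ₗᵢ[ℂ] K)) (hL : IsGroupoidRep μ L)
    (b : X → G → K) (hb : IsLCocycle μ L b)
    (E : Set X) (hEmeas : MeasurableSet E) (hEpos : 0 < μ E)
    (hbound : ∀ x ∈ E, ∃ C : ℝ, ∀ g : G, g⁻¹ • x ∈ E → ‖b x g‖ ≤ C) :
    ∃ b' : X → G → K, IsLCocycle μ L b' ∧
      IsLCoboundary μ L (fun x g => b x g - b' x g) ∧
      ∃ U : Set X, MeasurableSet U ∧ μ Uᶜ = 0 ∧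
        ∀ x ∈ U, ∃ C : ℝ, ∀ g : G, g⁻¹ • x ∈ U → ‖b' x g‖ ≤ C := by
  set S := ⋃ g : G, g • E
  have hS : MeasurableSet S := measurableSet_iUnion_smul hqi.1 hEmeas
  have hSc : μ Sᶜ = 0 := herg.measure_compl_eq_zero hS (smul_iUnion_smul_eq · E)
    (hEpos.trans_le (measure_mono (Set.subset_iUnion_of_subset 1 (one_smul G E).ge)))
  obtain ⟨e, n, hn, hnE⟩ := exists_measurable_index_inv_smul_mem hqi.1 hEmeas
  set ξ : X → K := fun x => b x (e (n x))
  have hξ : Measurable ξ :=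
    (measurable_from_prod_countable_left (f := fun p : X × ℕ => b p.1 (e p.2))
      fun k => hb.1 (e k)).comp (measurable_id.prodMk hn)
  obtain ⟨V, hVae, hV, hVcoc⟩ :=
    (ae_all_iff.2 fun g₁ => ae_all_iff.2 (hb.2 g₁)).exists_measurable_mem
  refine ⟨b - lCoboundary L ξ, hb.sub (isLCocycle_lCoboundary hqi.1 hL hξ),
    by simpa only [Pi.sub_apply, sub_sub_cancel] using isLCoboundary_lCoboundary hξ,
    S ∩ V, hS.inter hV, ?_, ?_⟩
  · rw [Set.compl_inter]
    exact measure_union_null hSc (mem_ae_iff.1 hVae)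
  · rintro x ⟨hxS, hxV⟩
    obtain ⟨C, hC⟩ := hbound _ (hnE x hxS)
    exact ⟨C, fun g hg => norm_sub_lCoboundary_le (hVcoc x hxV) hC (hnE _ hg.1)⟩

/-- Let `G` be a countable discrete group with an ergodic quasi-invariant action on a
standard Borel probability space `(X, μ)`, `L` a representation of `X ⋊ G` on a separable
complex Hilbert space and `b` an `L`-cocycle. If there is a positive-measure measurable
`E ⊆ X` such that `sup { ‖b(x,g)‖ : g⁻¹ • x ∈ E } < ∞` for every `x ∈ E`, then `b` is
cohomologous to an `L`-cocycle `b'` which satisfies the analogous bound on a conull set. -/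
theorem cocycle_bounded_on_set_cohomologous_to_bounded_on_conull
    {G X : Type*} [Group G] [Countable G]
    [MeasurableSpace X] [StandardBorelSpace X] [MulAction G X]
    (μ : Measure X) [IsProbabilityMeasure μ]
    (hqi : QuasiInvariantAction G μ) (herg : IsErgodicSMulAction G μ)
    {K : Type*} [NormedAddCommGroup K] [InnerProductSpace ℂ K]
    [CompleteSpace K] [SecondCountableTopology K] [MeasurableSpace K] [BorelSpace K]
    (L : X → G → (K ≃ₗᵢ[ℂ] K)) (hL : IsGroupoidRep μ L)
    (b : X → G → K) (hb : IsLCocycle μ L b)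
    (E : Set X) (hEmeas : MeasurableSet E) (hEpos : 0 < μ E)
    (hbound : ∀ x ∈ E, ∃ C : ℝ, ∀ g : G, g⁻¹ • x ∈ E → ‖b x g‖ ≤ C) :
    ∃ b' : X → G → K, IsLCocycle μ L b' ∧
      IsLCoboundary μ L (fun x g => b x g - b' x g) ∧
      ∃ U : Set X, MeasurableSet U ∧ μ Uᶜ = 0 ∧
        ∀ x ∈ U, ∃ C : ℝ, ∀ g : G, g⁻¹ • x ∈ U → ‖b' x g‖ ≤ C :=
  cocycle_bounded_on_set_cohomologous_to_bounded_on_conull_general μ hqi herg L hL b hb E hEmeas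
    hEpos hbound
end

section
/- Let L : X × G → U(K) be a strict representation (the identity L(x, g₁g₂) = L(x, g₁) ∘ L(g₁⁻¹•x, g₂) holds for all x ∈ X and all g₁, g₂ ∈ G), and let b : X × G → K be a strict L-cocycle (x ↦ b(x,g) is measurable for each g, and b(x, g₁g₂) = b(x, g₁) + L(x, g₁) b(g₁⁻¹•x, g₂) for all x ∈ X and all g₁, g₂ ∈ G). Assume that for every x ∈ X the set { b(x,g) : g ∈ G } is bounded in K. Then b is an L-coboundary: there exists a measurable ξ : X → K such that for every g ∈ G, b(x, g) = ξ(x) − L(x, g) ξ(g⁻¹•x) for μ-a.e. x. -/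
open MeasureTheory Filter Topology
open scoped Pointwise symmDiff InnerProductSpace ENNReal

/-! For each `x` the orbit `g ↦ b x g` is bounded, so it has a Chebyshev center `ξ x`, the center
of the smallest closed ball containing it. By the parallelogram law, two points whose farthest
distances to the orbit are both close to the optimal radius are close to each other; hence the
center exists (a minimising sequence is Cauchy) and is unique. The cocycle identity
`b x (g * k) = b x g + L x g (b (g⁻¹ • x) k)` says that the affine isometry
`v ↦ b x g + L x g v` maps the orbit at `g⁻¹ • x` onto the orbit at `x`, so it maps
`ξ (g⁻¹ • x)` to `ξ x`, which is the coboundary equation. Measurability holds because the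
optimal radius is an infimum over a countable dense set, and `ξ x` is the limit of the first
point of that set that is optimal up to `1 / (n + 1)`. -/

open Set Bornology TopologicalSpace

noncomputable section

section Metric

variable {ι ι' α β : Type*} [PseudoMetricSpace α] [PseudoMetricSpace β] {f : ι → α}

def farthestDist (f : ι → α) (u : α) : ℝ :=
  ⨆ i, dist u (f i)

def chebyshevRadius (f : ι → α) : ℝ :=
  ⨅ u, farthestDist f u

lemma farthestDist_nonneg (u : α) : 0 ≤ farthestDist f u :=
  Real.iSup_nonneg fun _ => dist_nonneg

lemma bddAbove_range_dist (hf : IsBounded (range f)) (u : α) :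
    BddAbove (range fun i => dist u (f i)) := by
  obtain ⟨r, hr⟩ := (Metric.isBounded_iff_subset_closedBall u).1 hf
  exact ⟨r, forall_mem_range.2 fun i => dist_comm (f i) u ▸ hr (mem_range_self i)⟩

lemma dist_le_farthestDist (hf : IsBounded (range f)) (u : α) (i : ι) :
    dist u (f i) ≤ farthestDist f u :=
  le_ciSup (bddAbove_range_dist hf u) i

lemma lipschitzWith_farthestDist (hf : IsBounded (range f)) :
    LipschitzWith 1 (farthestDist f) :=
  LipschitzWith.of_le_add fun u v =>
    Real.iSup_le (fun i => (dist_triangle u v (f i)).trans <| by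
      linarith [dist_le_farthestDist hf v i])
      (add_nonneg (farthestDist_nonneg v) dist_nonneg)

lemma chebyshevRadius_nonneg : 0 ≤ chebyshevRadius f :=
  Real.iInf_nonneg fun _ => farthestDist_nonneg _

lemma chebyshevRadius_le_farthestDist (u : α) : chebyshevRadius f ≤ farthestDist f u :=
  ciInf_le ⟨0, forall_mem_range.2 fun _ => farthestDist_nonneg _⟩ u

lemma chebyshevRadius_eq_iInf_of_denseRange (hf : IsBounded (range f)) {d : ℕ → α}
    (hd : DenseRange d) : chebyshevRadius f = ⨅ n, farthestDist f (d n) := by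
  rw [← iInf_range' (farthestDist f) d,
    hd.ciInf' (lipschitzWith_farthestDist hf).continuous, chebyshevRadius]

lemma tendsto_farthestDist_of_lt {u : ℕ → α}
    (hu : ∀ n : ℕ, farthestDist f (u n) < chebyshevRadius f + 1 / (n + 1)) :
    Tendsto (fun n => farthestDist f (u n)) atTop (𝓝 (chebyshevRadius f)) :=
  tendsto_of_tendsto_of_tendsto_of_le_of_le tendsto_const_nhds
    (by simpa using tendsto_one_div_add_atTop_nhds_zero_nat.const_add (chebyshevRadius f))
    (fun _ => chebyshevRadius_le_farthestDist _) (fun n => (hu n).le)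

lemma farthestDist_isometryEquiv {f : ι → β} {f' : ι' → α} (T : α ≃ᵢ β) (σ : ι' ≃ ι)
    (h : ∀ k, f (σ k) = T (f' k)) (w : α) :
    farthestDist f (T w) = farthestDist f' w := by
  simp only [farthestDist, ← σ.iSup_comp, h, T.dist_eq]

lemma chebyshevRadius_isometryEquiv {f : ι → β} {f' : ι' → α} (T : α ≃ᵢ β) (σ : ι' ≃ ι)
    (h : ∀ k, f (σ k) = T (f' k)) :
    chebyshevRadius f = chebyshevRadius f' := by
  simp only [chebyshevRadius, ← T.surjective.iInf_comp, farthestDist_isometryEquiv T σ h]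

end Metric

section InnerProduct

variable {ι E : Type*} [NormedAddCommGroup E] [InnerProductSpace ℝ E] {f : ι → E}

lemma dist_midpoint_sq (u v w : E) :
    4 * dist (midpoint ℝ u v) w ^ 2 + dist u v ^ 2 = 2 * dist u w ^ 2 + 2 * dist v w ^ 2 := by
  have hpar := parallelogram_law_with_norm ℝ (u - w) (v - w)
  have hsum : u - w + (v - w) = (2 : ℝ) • (midpoint ℝ u v - w) := by
    rw [midpoint_eq_smul_add, invOf_eq_inv]; module
  rw [hsum, norm_smul, sub_sub_sub_cancel_right, Real.norm_two] at hpar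
  simp only [dist_eq_norm]
  linarith

lemma farthestDist_midpoint_sq_add_dist_sq_le [Nonempty ι] (hf : IsBounded (range f))
    (u v : E) :
    4 * farthestDist f (midpoint ℝ u v) ^ 2 + dist u v ^ 2 ≤
      2 * farthestDist f u ^ 2 + 2 * farthestDist f v ^ 2 := by
  suffices farthestDist f (midpoint ℝ u v) ^ 2 ≤
      (2 * farthestDist f u ^ 2 + 2 * farthestDist f v ^ 2 - dist u v ^ 2) / 4 by linarith
  have hle : ∀ i, dist (midpoint ℝ u v) (f i) ^ 2 ≤
      (2 * farthestDist f u ^ 2 + 2 * farthestDist f v ^ 2 - dist u v ^ 2) / 4 := fun i => by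
    have := dist_midpoint_sq u v (f i)
    have hu := pow_le_pow_left₀ dist_nonneg (dist_le_farthestDist hf u i) 2
    have hv := pow_le_pow_left₀ dist_nonneg (dist_le_farthestDist hf v i) 2
    linarith
  have hc₀ := (sq_nonneg _).trans (hle (Classical.arbitrary ι))
  exact (Real.le_sqrt (farthestDist_nonneg _) hc₀).1 <|
    ciSup_le fun i => Real.le_sqrt_of_sq_le (hle i)

lemma dist_sq_le_farthestDist_sq [Nonempty ι] (hf : IsBounded (range f)) (u v : E) :
    dist u v ^ 2 ≤
      2 * farthestDist f u ^ 2 + 2 * farthestDist f v ^ 2 - 4 * chebyshevRadius f ^ 2 := by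
  have := chebyshevRadius_le_farthestDist (f := f) (midpoint ℝ u v)
  nlinarith [farthestDist_midpoint_sq_add_dist_sq_le hf u v, chebyshevRadius_nonneg (f := f)]

lemma tendsto_dist_of_tendsto_farthestDist [Nonempty ι] (hf : IsBounded (range f)) {β : Type*}
    {l : Filter β} {u v : β → E}
    (hu : Tendsto (fun n => farthestDist f (u n)) l (𝓝 (chebyshevRadius f)))
    (hv : Tendsto (fun n => farthestDist f (v n)) l (𝓝 (chebyshevRadius f))) :
    Tendsto (fun n => dist (u n) (v n)) l (𝓝 0) := by
  set R := chebyshevRadius f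
  have hlim : Tendsto (fun n => √(2 * farthestDist f (u n) ^ 2 + 2 * farthestDist f (v n) ^ 2
      - 4 * R ^ 2)) l (𝓝 √(2 * R ^ 2 + 2 * R ^ 2 - 4 * R ^ 2)) :=
    ((((hu.pow 2).const_mul 2).add ((hv.pow 2).const_mul 2)).sub_const _).sqrt
  rw [show 2 * R ^ 2 + 2 * R ^ 2 - 4 * R ^ 2 = 0 by ring, Real.sqrt_zero] at hlim
  exact squeeze_zero (fun _ => dist_nonneg)
    (fun n => Real.le_sqrt_of_sq_le (dist_sq_le_farthestDist_sq hf _ _)) hlim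

lemma cauchySeq_of_tendsto_farthestDist [Nonempty ι] (hf : IsBounded (range f)) {u : ℕ → E}
    (hu : Tendsto (fun n => farthestDist f (u n)) atTop (𝓝 (chebyshevRadius f))) :
    CauchySeq u := by
  rw [cauchySeq_iff_tendsto_dist_atTop_0, ← prod_atTop_atTop_eq]
  exact tendsto_dist_of_tendsto_farthestDist hf (hu.comp tendsto_fst) (hu.comp tendsto_snd)

lemma exists_farthestDist_eq_chebyshevRadius [Nonempty ι] [CompleteSpace E]
    (hf : IsBounded (range f)) : ∃ c, farthestDist f c = chebyshevRadius f := by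
  have hR : ∀ n : ℕ, ∃ u, farthestDist f u < chebyshevRadius f + 1 / (n + 1) := fun n =>
    exists_lt_of_ciInf_lt (lt_add_of_pos_right _ Nat.one_div_pos_of_nat)
  choose u hu using hR
  have hlim := tendsto_farthestDist_of_lt hu
  obtain ⟨c, hc⟩ := cauchySeq_tendsto_of_complete (cauchySeq_of_tendsto_farthestDist hf hlim)
  exact ⟨c, tendsto_nhds_unique
    ((lipschitzWith_farthestDist hf).continuous.tendsto c |>.comp hc) hlim⟩

/-- A point at which `farthestDist f` attains `chebyshevRadius f`; it exists and is unique for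
bounded families over a nonempty index type, and is a junk value otherwise. -/
def chebyshevCenter (f : ι → E) : E :=
  Classical.epsilon fun c => farthestDist f c = chebyshevRadius f

variable [Nonempty ι] [CompleteSpace E]

lemma farthestDist_chebyshevCenter (hf : IsBounded (range f)) :
    farthestDist f (chebyshevCenter f) = chebyshevRadius f :=
  Classical.epsilon_spec (exists_farthestDist_eq_chebyshevRadius hf)

lemma tendsto_chebyshevCenter (hf : IsBounded (range f)) {u : ℕ → E}
    (hu : Tendsto (fun n => farthestDist f (u n)) atTop (𝓝 (chebyshevRadius f))) :
    Tendsto u atTop (𝓝 (chebyshevCenter f)) :=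
  tendsto_iff_dist_tendsto_zero.2 <| tendsto_dist_of_tendsto_farthestDist hf hu <| by
    simpa only [farthestDist_chebyshevCenter hf] using tendsto_const_nhds

lemma eq_chebyshevCenter (hf : IsBounded (range f)) {c : E}
    (hc : farthestDist f c = chebyshevRadius f) : c = chebyshevCenter f :=
  tendsto_nhds_unique tendsto_const_nhds <|
    tendsto_chebyshevCenter hf (u := fun _ => c) (by simpa only [hc] using tendsto_const_nhds)

lemma chebyshevCenter_isometryEquiv {ι' F : Type*} [NormedAddCommGroup F]
    [InnerProductSpace ℝ F] [Nonempty ι'] [CompleteSpace F] {f' : ι' → F} (hf : IsBounded (range f))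
    (hf' : IsBounded (range f')) (T : F ≃ᵢ E) (σ : ι' ≃ ι) (h : ∀ k, f (σ k) = T (f' k)) :
    chebyshevCenter f = T (chebyshevCenter f') :=
  (eq_chebyshevCenter hf <| by rw [farthestDist_isometryEquiv T σ h,
    farthestDist_chebyshevCenter hf', chebyshevRadius_isometryEquiv T σ h]).symm

end InnerProduct

section Measurability

variable {X ι : Type*} [MeasurableSpace X] [Countable ι]

lemma Measurable.farthestDist {α : Type*} [PseudoMetricSpace α] [SecondCountableTopology α]
    [MeasurableSpace α] [OpensMeasurableSpace α] {b : X → ι → α} {w : X → α}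
    (hw : Measurable w) (hb : ∀ i, Measurable fun x => b x i) :
    Measurable fun x => farthestDist (b x) (w x) :=
  Measurable.iSup fun i => hw.dist (hb i)

lemma measurable_chebyshevRadius {α : Type*} [PseudoMetricSpace α] [SecondCountableTopology α]
    [Nonempty α] [MeasurableSpace α] [OpensMeasurableSpace α] {b : X → ι → α}
    (hb : ∀ i, Measurable fun x => b x i) (hbdd : ∀ x, IsBounded (range (b x))) :
    Measurable fun x => chebyshevRadius (b x) := by
  simp only [chebyshevRadius_eq_iInf_of_denseRange (hbdd _) (denseRange_denseSeq α)]
  exact Measurable.iInf fun n => measurable_const.farthestDist hb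

theorem measurable_chebyshevCenter {E : Type*} [NormedAddCommGroup E] [InnerProductSpace ℝ E]
    [CompleteSpace E] [SecondCountableTopology E] [MeasurableSpace E] [BorelSpace E]
    [Nonempty ι] {b : X → ι → E} (hb : ∀ i, Measurable fun x => b x i)
    (hbdd : ∀ x, IsBounded (range (b x))) :
    Measurable fun x => chebyshevCenter (b x) := by
  let d := denseSeq E
  have hex (n : ℕ) (x : X) :
      ∃ k, farthestDist (b x) (d k) < chebyshevRadius (b x) + 1 / (n + 1) :=
    exists_lt_of_ciInf_lt <| lt_of_eq_of_lt
      (chebyshevRadius_eq_iInf_of_denseRange (hbdd x) (denseRange_denseSeq E)).symm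
      (lt_add_of_pos_right _ Nat.one_div_pos_of_nat)
  have hfind (n : ℕ) : Measurable fun x => Nat.find (hex n x) :=
    measurable_find (hex n) fun k => measurableSet_lt (measurable_const.farthestDist hb)
      ((measurable_chebyshevRadius hb hbdd).add_const _)
  exact measurable_of_tendsto_metrizable (fun n => measurable_from_nat.comp (hfind n)) <|
    tendsto_pi_nhds.2 fun x => tendsto_chebyshevCenter (hbdd x) <|
      tendsto_farthestDist_of_lt fun n => Nat.find_spec (hex n x)

end Measurability

end

theorem strict_bounded_cocycle_is_coboundary_general
    {G X : Type*} [Group G] [Countable G]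
    [MeasurableSpace X] [MulAction G X]
    (μ : Measure X)
    {K : Type*} [NormedAddCommGroup K] [InnerProductSpace ℂ K]
    [CompleteSpace K] [SecondCountableTopology K] [MeasurableSpace K] [BorelSpace K]
    (L : X → G → (K ≃ₗᵢ[ℂ] K))
    (b : X → G → K)
    (hbmeas : ∀ g : G, Measurable fun x : X => b x g)
    (hbcoc : ∀ (x : X) (g₁ g₂ : G),
      b x (g₁ * g₂) = b x g₁ + L x g₁ (b (g₁⁻¹ • x) g₂))
    (hbound : ∀ x : X, ∃ C : ℝ, ∀ g : G, ‖b x g‖ ≤ C) :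
    IsLCoboundary μ L b := by
  let := InnerProductSpace.rclikeToReal ℂ K
  have hbdd (x : X) : IsBounded (range (b x)) := by
    obtain ⟨C, hC⟩ := hbound x
    exact isBounded_iff_forall_norm_le.2 ⟨C, forall_mem_range.2 hC⟩
  refine ⟨fun x => chebyshevCenter (b x), measurable_chebyshevCenter hbmeas hbdd,
    fun g => Eventually.of_forall fun x => ?_⟩
  dsimp only
  rw [chebyshevCenter_isometryEquiv (hbdd x) (hbdd (g⁻¹ • x))
    ((L x g).toIsometryEquiv.trans (IsometryEquiv.addLeft (b x g))) (Equiv.mulLeft g) (hbcoc x g)]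
  simp

/-- Let `G` be a countable discrete group with a measurable quasi-invariant action on a
standard Borel probability space `(X, μ)`, `L` a strict representation of `X ⋊ G` on a
separable complex Hilbert space and `b` a strict `L`-cocycle such that for each `x` the set
`{ b(x,g) : g ∈ G }` is bounded. Then `b` is an `L`-coboundary. -/
theorem strict_bounded_cocycle_is_coboundary
    {G X : Type*} [Group G] [Countable G]
    [MeasurableSpace X] [StandardBorelSpace X] [MulAction G X]
    (μ : Measure X) [IsProbabilityMeasure μ] (hqi : QuasiInvariantAction G μ)
    {K : Type*} [NormedAddCommGroup K] [InnerProductSpace ℂ K]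
    [CompleteSpace K] [SecondCountableTopology K] [MeasurableSpace K] [BorelSpace K]
    (L : X → G → (K ≃ₗᵢ[ℂ] K))
    (hLmeas : ∀ (g : G) (v : K), Measurable fun x : X => L x g v)
    (hLmul : ∀ (x : X) (g₁ g₂ : G) (v : K),
      L x (g₁ * g₂) v = L x g₁ (L (g₁⁻¹ • x) g₂ v))
    (b : X → G → K)
    (hbmeas : ∀ g : G, Measurable fun x : X => b x g)
    (hbcoc : ∀ (x : X) (g₁ g₂ : G),
      b x (g₁ * g₂) = b x g₁ + L x g₁ (b (g₁⁻¹ • x) g₂))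
    (hbound : ∀ x : X, ∃ C : ℝ, ∀ g : G, ‖b x g‖ ≤ C) :
    IsLCoboundary μ L b :=
  strict_bounded_cocycle_is_coboundary_general μ L b hbmeas hbcoc hbound
end
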